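/- Let V = K², let L ⊆ V be a free O'-submodule of rank 2 with K·L = V, and let g ∈ GL(2, K) satisfy g·L = a·L for some a ∈ K*. Then ν'(det g) ∈ 2·(ℤ × ℤ), i.e. both components of ν'(det g) are even. (In other words, the stabilizer of any vertex class of the higher Bruhat–Tits tree is contained in the subgroup PGL⁺(V) = ker(ν'(det(·)) mod 2Γ_K).) -/

import Mathlib

/-!
Write `L = O'·b₀ ⊕ O'·b₁`. The condition `g·L = a·L` says that both `a⁻¹·g` and `a·g⁻¹` map `L`
into itself; in the basis `b` they are therefore matrices over `O'`, so their determinants lie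
in `O'`. These determinants multiply to `1`, so `det (a⁻¹·g)` is a unit of the valuation ring `O'`
and `ν'(det (a⁻¹·g)) = 0`. Since `ν'` is additive, `ν'(det g) = ν'(a² · det (a⁻¹·g)) = 2·ν'(a)`.
-/

set_option synthInstance.maxHeartbeats 1000000
set_option maxHeartbeats 1000000

noncomputable section

open HahnSeries

namespace TwoDimLocal

variable (k : Type) [Field k]

/-- `k((u))`, the field of Laurent series over `k`. -/
abbrev K1 := LaurentSeries k

/-- `K = k((u))((t))`, the two-dimensional local field of iterated Laurent series. -/
abbrev K := LaurentSeries (LaurentSeries k)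

section Nonneg

variable (F : Type) [Field F]

lemma order_nonneg_of_support {x : LaurentSeries F} (hx : x ≠ 0)
    (h : ∀ n : ℤ, n < 0 → x.coeff n = 0) : 0 ≤ x.order := by
  by_contra hlt
  push_neg at hlt
  exact hx (coeff_order_eq_zero.1 (h x.order hlt))

/-- The subring `F[[X]] ⊆ F((X))` of power series, described by vanishing of the
coefficients of negative index. -/
def nonneg : Subring (LaurentSeries F) where
  carrier := {x | ∀ n : ℤ, n < 0 → x.coeff n = 0}
  zero_mem' := by intro n _; simp
  one_mem' := by
    intro n hn
    rw [HahnSeries.coeff_one, if_neg (by omega)]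
  add_mem' := by
    intro a b ha hb n hn
    rw [HahnSeries.coeff_add, ha n hn, hb n hn, add_zero]
  neg_mem' := by
    intro a ha n hn
    rw [HahnSeries.coeff_neg, ha n hn, neg_zero]
  mul_mem' := by
    intro a b ha hb n hn
    by_contra hne
    obtain ⟨i, hi, j, hj, rfl⟩ := support_mul_subset ((mem_support _ _).2 hne)
    rw [mem_support] at hi hj
    have hi0 : 0 ≤ i := by by_contra h; push_neg at h; exact hi (ha i h)
    have hj0 : 0 ≤ j := by by_contra h; push_neg at h; exact hj (hb j h)
    exact absurd hn (not_lt.2 (add_nonneg hi0 hj0))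

lemma mem_nonneg_iff {x : LaurentSeries F} :
    x ∈ nonneg F ↔ ∀ n : ℤ, n < 0 → x.coeff n = 0 := Iff.rfl

lemma coeff_zero_mul {x y : LaurentSeries F} (hx : x ∈ nonneg F) (hy : y ∈ nonneg F) :
    (x * y).coeff 0 = x.coeff 0 * y.coeff 0 := by
  rcases eq_or_ne x 0 with rfl | hx0
  · simp
  rcases eq_or_ne y 0 with rfl | hy0
  · simp
  have hxo : 0 ≤ x.order := order_nonneg_of_support F hx0 hx
  have hyo : 0 ≤ y.order := order_nonneg_of_support F hy0 hy
  rcases lt_or_eq_of_le hxo with hxo' | hxo'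
  · have h1 : x.coeff 0 = 0 := HahnSeries.coeff_eq_zero_of_lt_order hxo'
    have h2 : (x * y).coeff 0 = 0 := by
      apply HahnSeries.coeff_eq_zero_of_lt_order
      rw [HahnSeries.order_mul hx0 hy0]
      omega
    rw [h1, h2, zero_mul]
  rcases lt_or_eq_of_le hyo with hyo' | hyo'
  · have h1 : y.coeff 0 = 0 := HahnSeries.coeff_eq_zero_of_lt_order hyo'
    have h2 : (x * y).coeff 0 = 0 := by
      apply HahnSeries.coeff_eq_zero_of_lt_order
      rw [HahnSeries.order_mul hx0 hy0]
      omega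
    rw [h1, h2, mul_zero]
  have := HahnSeries.coeff_mul_order_add_order x y
  rw [HahnSeries.leadingCoeff_eq, HahnSeries.leadingCoeff_eq, ← hxo', ← hyo'] at this
  simpa using this

end Nonneg

/-- The ring of integers `O_K = k((u))[[t]]` of `K` with respect to the `t`-adic valuation. -/
def OK : Subring (K k) := nonneg (K1 k)

/-- The rank-2 valuation subring `O' = p⁻¹(k[[u]]) ⊆ K`, consisting of those `t`-adic
integers whose constant `t`-coefficient is a power series in `u`. -/
def Oprime : Subring (K k) where
  carrier := {x | x ∈ OK k ∧ x.coeff 0 ∈ nonneg k}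
  zero_mem' := ⟨Subring.zero_mem _, by simp⟩
  one_mem' := ⟨Subring.one_mem _, by
    intro n hn
    rw [show ((1 : K k).coeff 0) = 1 from by rw [HahnSeries.coeff_one]; simp]
    rw [HahnSeries.coeff_one, if_neg (by omega)]⟩
  add_mem' := by
    rintro a b ⟨ha1, ha2⟩ ⟨hb1, hb2⟩
    refine ⟨Subring.add_mem _ ha1 hb1, ?_⟩
    rw [HahnSeries.coeff_add]
    exact Subring.add_mem _ ha2 hb2
  neg_mem' := by
    rintro a ⟨ha1, ha2⟩
    refine ⟨Subring.neg_mem _ ha1, ?_⟩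
    rw [HahnSeries.coeff_neg]
    exact Subring.neg_mem _ ha2
  mul_mem' := by
    rintro a b ⟨ha1, ha2⟩ ⟨hb1, hb2⟩
    refine ⟨Subring.mul_mem _ ha1 hb1, ?_⟩
    rw [coeff_zero_mul (K1 k) ha1 hb1]
    exact Subring.mul_mem _ ha2 hb2

lemma Oprime_le_OK : (Oprime k : Set (K k)) ⊆ (OK k : Set (K k)) := fun _ h => h.1

/-- The local parameter `t` of `K = k((u))((t))`. -/
def t : K k := HahnSeries.single (1 : ℤ) 1

/-- The local parameter `u` of `K = k((u))((t))`, i.e. the image in `K` of the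
local parameter of `k((u))`. -/
def u : K k := HahnSeries.C (HahnSeries.single (1 : ℤ) (1 : k))

/-- The maximal ideal `m = p⁻¹(u·k[[u]])` of `O'`, as a subset of `K`. -/
def mSet : Set (K k) := {x | x ∈ Oprime k ∧ (x.coeff 0).coeff 0 = 0}

/-- The rank-two valuation `ν' : K* → ℤ ×ₗ ℤ`: the first component is the `t`-adic order,
the second one the `u`-adic order of the leading `t`-coefficient. (Junk value at `0`.) -/
def nu (x : K k) : ℤ ×ₗ ℤ := toLex (x.order, (x.coeff x.order).order)

end TwoDimLocal

namespace TwoDimLocal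

open Matrix

section FieldHelpers

variable (F : Type) [Field F]

lemma field_mulVec_smul (g : Matrix (Fin 2) (Fin 2) F) (a : F) (x : Fin 2 → F) :
    g.mulVec (a • x) = a • g.mulVec x :=
  Matrix.mulVec_smul g a x

lemma field_smul_comm (a b : F) (x : Fin 2 → F) : a • b • x = b • a • x :=
  smul_comm a b x

end FieldHelpers

variable (k : Type) [Field k]

/-- The `O'`-linear endomorphism of `K²` given by a matrix. -/
def gLin (g : Matrix (Fin 2) (Fin 2) (K k)) :
    (Fin 2 → K k) →ₗ[Oprime k] (Fin 2 → K k) where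
  toFun x := g.mulVec x
  map_add' x y := Matrix.mulVec_add g x y
  map_smul' c x := by
    show g.mulVec ((c : K k) • x) = (c : K k) • g.mulVec x
    exact field_mulVec_smul (K k) g (c : K k) x

/-- Scaling by `a ∈ K` as an `O'`-linear endomorphism of `K²`. -/
def smulLin (a : K k) : (Fin 2 → K k) →ₗ[Oprime k] (Fin 2 → K k) where
  toFun x := a • x
  map_add' x y := smul_add a x y
  map_smul' c x := by
    show a • (c : K k) • x = (c : K k) • a • x
    exact field_smul_comm (K k) a (c : K k) x

/-- The scaling `a·N` of an `O'`-submodule `N ⊆ K²` by `a ∈ K`. -/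
def scaleL (a : K k) (N : Submodule (Oprime k) (Fin 2 → K k)) :
    Submodule (Oprime k) (Fin 2 → K k) :=
  Submodule.map (smulLin k a) N

end TwoDimLocal

namespace TwoDimLocal

open Matrix

variable (k : Type) [Field k]

/-- Lattices in `V = K²`: free rank-2 `O'`-submodules spanning `V` over `K`, i.e. the
submodules of the form `O'·e₁ ⊕ O'·e₂` for a `K`-basis `(e₁, e₂)`. -/
def IsLattice2 (L : Submodule (Oprime k) (Fin 2 → K k)) : Prop :=
  ∃ b : Module.Basis (Fin 2) (K k) (Fin 2 → K k), ∀ x : Fin 2 → K k,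
    x ∈ L ↔ ∃ c d : K k, c ∈ Oprime k ∧ d ∈ Oprime k ∧ x = c • b 0 + d • b 1

theorem _root_.Matrix.det_mem_of_forall_mem {R : Type*} [CommRing R] (S : Subring R)
    {n : Type*} [Fintype n] [DecidableEq n] {M : Matrix n n R} (hM : ∀ i j, M i j ∈ S) :
    M.det ∈ S := by
  rw [Matrix.det_apply]
  exact S.sum_mem fun σ _ => by
    rw [Units.smul_def]
    exact S.zsmul_mem (S.prod_mem fun i _ => hM _ _) _

lemma order_eq_zero_of_mul_eq_one {F : Type} [Field F] {x y : LaurentSeries F}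
    (hx : x ∈ nonneg F) (hy : y ∈ nonneg F) (hxy : x * y = 1) : x.order = 0 := by
  have hx0 : x ≠ 0 := left_ne_zero_of_mul_eq_one hxy
  have hy0 : y ≠ 0 := right_ne_zero_of_mul_eq_one hxy
  have hsum : x.order + y.order = 0 := by rw [← order_mul hx0 hy0, hxy, order_one]
  have := order_nonneg_of_support F hx0 hx
  have := order_nonneg_of_support F hy0 hy
  omega

section

variable {k}

lemma nu_mul {x y : K k} (hx : x ≠ 0) (hy : y ≠ 0) : nu k (x * y) = nu k x + nu k y := by
  simp only [nu, ← leadingCoeff_eq]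
  rw [leadingCoeff_mul, order_mul hx hy,
    order_mul (leadingCoeff_ne_zero.2 hx) (leadingCoeff_ne_zero.2 hy)]
  rfl

lemma nu_eq_zero_of_mul_eq_one {v w : K k} (hv : v ∈ Oprime k) (hw : w ∈ Oprime k)
    (hvw : v * w = 1) : nu k v = 0 := by
  have hcoeff : v.coeff 0 * w.coeff 0 = 1 := by
    rw [← coeff_zero_mul (K1 k) hv.1 hw.1, hvw, coeff_one, if_pos rfl]
  simp only [nu, order_eq_zero_of_mul_eq_one hv.1 hw.1 hvw,
    order_eq_zero_of_mul_eq_one hv.2 hw.2 hcoeff]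
  rfl

lemma IsLattice2.det_mem_of_mulVec_mem {L : Submodule (Oprime k) (Fin 2 → K k)}
    (hL : IsLattice2 k L) {M : Matrix (Fin 2) (Fin 2) (K k)} (hM : ∀ x ∈ L, M *ᵥ x ∈ L) :
    M.det ∈ Oprime k := by
  obtain ⟨b, hb⟩ := hL
  have hbL : ∀ j, b j ∈ L := by
    intro j
    rw [hb]
    fin_cases j
    · exact ⟨1, 0, one_mem _, zero_mem _, by ext; simp⟩
    · exact ⟨0, 1, zero_mem _, one_mem _, by ext; simp⟩
  rw [← LinearMap.det_toLin', ← LinearMap.det_toMatrix b]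
  refine Matrix.det_mem_of_forall_mem _ fun i j => ?_
  obtain ⟨c, d, hc, hd, hcd⟩ := (hb _).1 (hM _ (hbL j))
  rw [LinearMap.toMatrix_apply, Matrix.toLin'_apply, hcd]
  fin_cases i <;> simpa

lemma inv_smul_mulVec_mem_of_map_eq_scaleL {L : Submodule (Oprime k) (Fin 2 → K k)}
    {G : Matrix (Fin 2) (Fin 2) (K k)} {a : K k} (ha : a ≠ 0)
    (hstab : L.map (gLin k G) = scaleL k a L) {x : Fin 2 → K k} (hx : x ∈ L) :
    (a⁻¹ • G) *ᵥ x ∈ L := by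
  obtain ⟨y, hy, hxy⟩ : gLin k G x ∈ scaleL k a L := hstab ▸ Submodule.mem_map_of_mem hx
  change a • y = G *ᵥ x at hxy
  rwa [smul_mulVec, ← hxy, inv_smul_smul₀ ha]

lemma smul_inv_mulVec_mem_of_map_eq_scaleL {L : Submodule (Oprime k) (Fin 2 → K k)}
    {g : GL (Fin 2) (K k)} {a : K k} (hstab : L.map (gLin k g) = scaleL k a L)
    {x : Fin 2 → K k} (hx : x ∈ L) : (a • (↑g⁻¹ : Matrix (Fin 2) (Fin 2) (K k))) *ᵥ x ∈ L := by
  obtain ⟨y, hy, hxy⟩ : smulLin k a x ∈ L.map (gLin k g) := hstab ▸ Submodule.mem_map_of_mem hx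
  change (g : Matrix (Fin 2) (Fin 2) (K k)) *ᵥ y = a • x at hxy
  rwa [smul_mulVec, ← mulVec_smul, ← hxy, mulVec_mulVec, Units.inv_mul, one_mulVec]

end

/-- If `g ∈ GL(2, K)` stabilizes the class of a lattice `L ⊆ K²`
(i.e. `g·L = a·L` for some `a ∈ K*`), then both components of `ν'(det g)` are even;
that is, the stabilizer of a vertex is contained in `PGL⁺ = ker(ν'(det(·)) mod 2Γ)`. -/
theorem stabilizer_det_valuation_even (L : Submodule (Oprime k) (Fin 2 → K k))
    (hL : IsLattice2 k L) (g : GL (Fin 2) (K k)) (a : K k) (ha : a ≠ 0)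
    (hstab : Submodule.map (gLin k (g : Matrix (Fin 2) (Fin 2) (K k))) L = scaleL k a L) :
    ∃ p : ℤ × ℤ, nu k (Matrix.det (g : Matrix (Fin 2) (Fin 2) (K k)))
      = toLex (2 * p.1, 2 * p.2) := by
  set G : Matrix (Fin 2) (Fin 2) (K k) := ↑g
  have hGinv : G.det * (↑g⁻¹ : Matrix (Fin 2) (Fin 2) (K k)).det = 1 := by
    rw [← det_mul, Units.mul_inv, det_one]
  have hunit : (a⁻¹ • G).det * (a • (↑g⁻¹ : Matrix (Fin 2) (Fin 2) (K k))).det = 1 := by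
    rw [det_smul, det_smul, mul_mul_mul_comm, ← mul_pow, inv_mul_cancel₀ ha, one_pow, one_mul,
      hGinv]
  have hnu : nu k (a⁻¹ • G).det = 0 := nu_eq_zero_of_mul_eq_one
    (hL.det_mem_of_mulVec_mem fun _ => inv_smul_mulVec_mem_of_map_eq_scaleL ha hstab)
    (hL.det_mem_of_mulVec_mem fun _ => smul_inv_mulVec_mem_of_map_eq_scaleL hstab) hunit
  have hdetG : G.det = a * a * (a⁻¹ • G).det := by
    rw [det_smul, Fintype.card_fin]
    field_simp
  refine ⟨ofLex (nu k a), ?_⟩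
  rw [hdetG, nu_mul (mul_ne_zero ha ha) (left_ne_zero_of_mul_eq_one hunit), nu_mul ha ha, hnu,
    add_zero, two_mul, two_mul]
  rfl

end TwoDimLocal
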